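/- Let (E_ν)_{ν∈Λ} be a family of matricially normed spaces and let E be their matricial ℓ¹-sum, with natural embeddings i_ν : E_ν → E. Then E is a matricially normed space, each i_ν is completely contractive, and (E, (i_ν)) is the coproduct of the family in the category of matricially normed spaces and completely contractive operators: for every matricially normed space Y and every family of completely contractive operators ψ_ν : E_ν → Y there exists a unique completely contractive operator ψ : E → Y with ψ ∘ i_ν = ψ_ν for all ν. -/

import Mathlib

open scoped BigOperators
open Matrix

noncomputable section

/-- Block-diagonal sum `u ⊕ w` of two square matrices with entries in `E`. -/
def MatDSum {E : Type*} [Zero E] {m k : ℕ}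
    (u : Matrix (Fin m) (Fin m) E) (w : Matrix (Fin k) (Fin k) E) :
    Matrix (Fin (m + k)) (Fin (m + k)) E :=
  Matrix.reindex finSumFinEquiv finSumFinEquiv (Matrix.fromBlocks u 0 0 w)

/-- Left action `S·u` of a scalar matrix on an `E`-valued matrix. -/
def scalLeft {E : Type*} [AddCommMonoid E] [Module ℂ E] {m : ℕ}
    (S : Matrix (Fin m) (Fin m) ℂ) (u : Matrix (Fin m) (Fin m) E) :
    Matrix (Fin m) (Fin m) E :=
  Matrix.of fun i j => ∑ k, S i k • u k j

/-- Right action `u·S` of a scalar matrix on an `E`-valued matrix. -/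
def scalRight {E : Type*} [AddCommMonoid E] [Module ℂ E] {m : ℕ}
    (u : Matrix (Fin m) (Fin m) E) (S : Matrix (Fin m) (Fin m) ℂ) :
    Matrix (Fin m) (Fin m) E :=
  Matrix.of fun i j => ∑ k, S k j • u i k

/-- The operator norm `‖S‖_o` of a complex scalar matrix, i.e. its norm as an
operator on the euclidean (Hilbert) space `ℂⁿ`. -/
noncomputable def opNorm {m : ℕ} (S : Matrix (Fin m) (Fin m) ℂ) : ℝ :=
  ‖LinearMap.toContinuousLinearMap (Matrix.toEuclideanLin S)‖

/-- The `m`-th amplification of a map `φ : E → F`: apply `φ` entrywise. -/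
def matAmpl {E F : Type*} (φ : E → F) {m : ℕ} (u : Matrix (Fin m) (Fin m) E) :
    Matrix (Fin m) (Fin m) F :=
  Matrix.of fun i j => φ (u i j)

/-- The operator `φ^v : M_n → E`, `(λ_{ij}) ↦ Σ_{i,j} λ_{ji} • x_{ij}`, associated with
`v = (x_{ij}) ∈ M_n(E)`. -/
def matPhi {E : Type*} [AddCommMonoid E] [Module ℂ E] {n : ℕ}
    (v : Matrix (Fin n) (Fin n) E) (a : Matrix (Fin n) (Fin n) ℂ) : E :=
  ∑ i, ∑ j, a j i • v i j

/-- `ν` is a matrix-norm on the complex vector space `E`: each `ν m` is a norm on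
`M_m(E)`, and Axioms 1 and 2 of Effros/Ruan hold. -/
def IsMatrixNorm {E : Type} [AddCommGroup E] [Module ℂ E]
    (ν : ∀ m : ℕ, Matrix (Fin m) (Fin m) E → ℝ) : Prop :=
  (∀ (m : ℕ) (u v : Matrix (Fin m) (Fin m) E), ν m (u + v) ≤ ν m u + ν m v) ∧
  (∀ (m : ℕ) (c : ℂ) (u : Matrix (Fin m) (Fin m) E), ν m (c • u) = ‖c‖ * ν m u) ∧
  (∀ (m : ℕ) (u : Matrix (Fin m) (Fin m) E), ν m u = 0 ↔ u = 0) ∧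
  (∀ (m k : ℕ) (u : Matrix (Fin m) (Fin m) E),
      ν (m + k) (MatDSum u (0 : Matrix (Fin k) (Fin k) E)) = ν m u) ∧
  (∀ (m : ℕ) (S : Matrix (Fin m) (Fin m) ℂ) (u : Matrix (Fin m) (Fin m) E),
      ν m (scalLeft S u) ≤ opNorm S * ν m u) ∧
  (∀ (m : ℕ) (u : Matrix (Fin m) (Fin m) E) (S : Matrix (Fin m) (Fin m) ℂ),
      ν m (scalRight u S) ≤ ν m u * opNorm S)

/-- The set of values `‖(φ^v)_m(u)‖_m` over all proper couples `(E, v)`, i.e. over all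
matricially normed spaces `E` and all `v` in the closed unit ball of `M_n(E)`. -/
def hatNormSet (n : ℕ) {m : ℕ}
    (u : Matrix (Fin m) (Fin m) (Matrix (Fin n) (Fin n) ℂ)) : Set ℝ :=
  { r | ∃ (E : Type) (_ : AddCommGroup E) (_ : Module ℂ E)
        (ν : ∀ m' : ℕ, Matrix (Fin m') (Fin m') E → ℝ),
        IsMatrixNorm ν ∧
        ∃ v : Matrix (Fin n) (Fin n) E, ν n v ≤ 1 ∧ r = ν m (matAmpl (matPhi v) u) }

/-- The matrix-norm of the matricially normed space `M̂_n`: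
`‖u‖_m = sup { ‖(φ^v)_m(u)‖_m : (E, v) a proper couple }`. -/
noncomputable def hatNorm (n : ℕ) {m : ℕ}
    (u : Matrix (Fin m) (Fin m) (Matrix (Fin n) (Fin n) ℂ)) : ℝ :=
  sSup (hatNormSet n u)

/-- `φ` is a completely contractive (linear) operator between the matricially normed
spaces `(E, νE)` and `(F, νF)`: every amplification `φ_m` is contractive. -/
def IsCC {E F : Type} [AddCommGroup E] [Module ℂ E] [AddCommGroup F] [Module ℂ F]
    (νE : ∀ m : ℕ, Matrix (Fin m) (Fin m) E → ℝ)
    (νF : ∀ m : ℕ, Matrix (Fin m) (Fin m) F → ℝ) (φ : E → F) : Prop :=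
  IsLinearMap ℂ φ ∧
  ∀ (m : ℕ) (u : Matrix (Fin m) (Fin m) E), νF m (matAmpl φ u) ≤ νE m u

open DirectSum

/-- The `i`-th component matrix of a matrix with entries in a direct sum. -/
def compMat {ι : Type} {E : ι → Type} [∀ i, AddCommGroup (E i)] {m : ℕ}
    (u : Matrix (Fin m) (Fin m) (⨁ i, E i)) (i : ι) :
    Matrix (Fin m) (Fin m) (E i) :=
  Matrix.of fun a b => u a b i

/-- The matrix-norm of the matricial `ℓ¹`-sum of the family `(E i, ν i)`:
`‖⊕_i u_i‖_m = Σ_i ‖u_i‖_m` (a finite sum, since only finitely many components of a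
matrix over the algebraic direct sum are nonzero). -/
noncomputable def l1Norm {ι : Type} {E : ι → Type} [∀ i, AddCommGroup (E i)]
    (ν : ∀ i, ∀ m : ℕ, Matrix (Fin m) (Fin m) (E i) → ℝ)
    (m : ℕ) (u : Matrix (Fin m) (Fin m) (⨁ i, E i)) : ℝ :=
  ∑ᶠ i, ν i m (compMat u i)

/-!
A matrix over the algebraic direct sum has only finitely many nonzero component matrices, so
`l1Norm` is a finite sum. Taking the `i`-th component is linear, hence commutes with sums,
scalar multiples, block-diagonal sums and both scalar-matrix actions; every axiom of a matrix norm
for `l1Norm` therefore follows summand by summand from the same axiom for the `ν i`. The map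
induced by the `ψ i` sends `u` to the finite sum `∑ i, (ψ i)_m (u_i)`, whose norm the triangle
inequality in `Y` bounds by `∑ i, ‖u_i‖_m = ‖u‖_m`; uniqueness holds because a linear map out of
a direct sum is determined by its restrictions to the summands.
-/

namespace IsMatrixNorm

variable {E : Type} [AddCommGroup E] [Module ℂ E] {ν : ∀ m : ℕ, Matrix (Fin m) (Fin m) E → ℝ}

theorem map_zero (hν : IsMatrixNorm ν) (m : ℕ) : ν m 0 = 0 :=
  (hν.2.2.1 m 0).mpr rfl

theorem nonneg (hν : IsMatrixNorm ν) (m : ℕ) (u : Matrix (Fin m) (Fin m) E) : 0 ≤ ν m u := by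
  have h := hν.1 m u (-u)
  have hneg : ν m (-u) = ν m u := by simpa using hν.2.1 m (-1) u
  rw [add_neg_cancel, hν.map_zero, hneg] at h
  linarith

theorem sum_le {κ : Type*} (hν : IsMatrixNorm ν) (m : ℕ) (s : Finset κ)
    (f : κ → Matrix (Fin m) (Fin m) E) : ν m (∑ k ∈ s, f k) ≤ ∑ k ∈ s, ν m (f k) :=
  Finset.le_sum_of_subadditive (ν m) (hν.map_zero m).le (hν.1 m) s f

end IsMatrixNorm

section Amplification

theorem matAmpl_MatDSum {E F : Type*} [Zero E] [Zero F] {φ : E → F} (hφ : φ 0 = 0) {m k : ℕ}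
    (u : Matrix (Fin m) (Fin m) E) (w : Matrix (Fin k) (Fin k) E) :
    matAmpl φ (MatDSum u w) = MatDSum (matAmpl φ u) (matAmpl φ w) := by
  ext a b
  simp only [matAmpl, MatDSum, Matrix.of_apply, Matrix.reindex_apply, Matrix.submatrix_apply]
  rcases finSumFinEquiv.symm a with a' | a' <;> rcases finSumFinEquiv.symm b with b' | b' <;>
    simp [Matrix.fromBlocks, hφ]

theorem matAmpl_zero {E F : Type*} [Zero E] [Zero F] {φ : E → F} (hφ : φ 0 = 0) {m : ℕ} :
    matAmpl φ (0 : Matrix (Fin m) (Fin m) E) = 0 := by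
  ext a b
  exact hφ

variable {E F : Type*} [AddCommGroup E] [Module ℂ E] [AddCommGroup F] [Module ℂ F]
  (f : E →ₗ[ℂ] F) {m : ℕ}

theorem matAmpl_add (u v : Matrix (Fin m) (Fin m) E) :
    matAmpl f (u + v) = matAmpl f u + matAmpl f v := by
  ext a b
  exact map_add f _ _

theorem matAmpl_smul (c : ℂ) (u : Matrix (Fin m) (Fin m) E) :
    matAmpl f (c • u) = c • matAmpl f u := by
  ext a b
  exact map_smul f _ _

theorem matAmpl_scalLeft (S : Matrix (Fin m) (Fin m) ℂ) (u : Matrix (Fin m) (Fin m) E) :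
    matAmpl f (scalLeft S u) = scalLeft S (matAmpl f u) := by
  ext a b
  simp [matAmpl, scalLeft, map_sum]

theorem matAmpl_scalRight (u : Matrix (Fin m) (Fin m) E) (S : Matrix (Fin m) (Fin m) ℂ) :
    matAmpl f (scalRight u S) = scalRight (matAmpl f u) S := by
  ext a b
  simp [matAmpl, scalRight, map_sum]

end Amplification

section L1Sum

variable {ι : Type} {E : ι → Type} [∀ i, AddCommGroup (E i)] {m : ℕ}

theorem exists_finset_compMat_eq_zero (u : Matrix (Fin m) (Fin m) (⨁ i, E i)) :
    ∃ s : Finset ι, ∀ i ∉ s, compMat u i = 0 := by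
  classical
  refine ⟨Finset.univ.biUnion fun a => Finset.univ.biUnion fun b => (u a b).support,
    fun i hi => ?_⟩
  ext a b
  simp only [Finset.mem_biUnion, Finset.mem_univ, true_and, not_exists] at hi
  exact DFinsupp.notMem_support_iff.mp (hi a b)

variable [∀ i, Module ℂ (E i)] {ν : ∀ i, ∀ m : ℕ, Matrix (Fin m) (Fin m) (E i) → ℝ}

theorem compMat_eq_matAmpl_component (u : Matrix (Fin m) (Fin m) (⨁ i, E i)) (i : ι) :
    compMat u i = matAmpl (DirectSum.component ℂ ι E i) u :=
  rfl

theorem support_l1Norm_summand_subset (hν : ∀ i, IsMatrixNorm (ν i))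
    {u : Matrix (Fin m) (Fin m) (⨁ i, E i)} {s : Finset ι} (hs : ∀ i ∉ s, compMat u i = 0) :
    Function.support (fun i => ν i m (compMat u i)) ⊆ s := fun i hi =>
  by_contra fun his => hi <| by simp only [hs i his, (hν i).map_zero]

theorem l1Norm_eq_sum (hν : ∀ i, IsMatrixNorm (ν i)) {u : Matrix (Fin m) (Fin m) (⨁ i, E i)}
    {s : Finset ι} (hs : ∀ i ∉ s, compMat u i = 0) :
    l1Norm ν m u = ∑ i ∈ s, ν i m (compMat u i) :=
  finsum_eq_sum_of_support_subset _ (support_l1Norm_summand_subset hν hs)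

theorem hasFiniteSupport_l1Norm_summand (hν : ∀ i, IsMatrixNorm (ν i))
    (u : Matrix (Fin m) (Fin m) (⨁ i, E i)) :
    Function.HasFiniteSupport fun i => ν i m (compMat u i) :=
  let ⟨s, hs⟩ := exists_finset_compMat_eq_zero u
  s.finite_toSet.subset (support_l1Norm_summand_subset hν hs)

variable (hν : ∀ i, IsMatrixNorm (ν i))
include hν

theorem l1Norm_add_le (u v : Matrix (Fin m) (Fin m) (⨁ i, E i)) :
    l1Norm ν m (u + v) ≤ l1Norm ν m u + l1Norm ν m v := by
  have hu := hasFiniteSupport_l1Norm_summand hν u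
  have hv := hasFiniteSupport_l1Norm_summand hν v
  rw [l1Norm, l1Norm, l1Norm, ← finsum_add_distrib hu hv]
  refine finsum_le_finsum' (hasFiniteSupport_l1Norm_summand hν _) (hu.add hv) fun i => ?_
  simpa only [compMat_eq_matAmpl_component, matAmpl_add] using (hν i).1 m _ _

theorem l1Norm_smul (c : ℂ) (u : Matrix (Fin m) (Fin m) (⨁ i, E i)) :
    l1Norm ν m (c • u) = ‖c‖ * l1Norm ν m u := by
  rw [l1Norm, l1Norm, mul_finsum]
  refine finsum_congr fun i => ?_
  simpa only [compMat_eq_matAmpl_component, matAmpl_smul] using (hν i).2.1 m c _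

theorem l1Norm_eq_zero_iff (u : Matrix (Fin m) (Fin m) (⨁ i, E i)) :
    l1Norm ν m u = 0 ↔ u = 0 := by
  refine ⟨fun h => ?_, fun h => ?_⟩
  · have hcomp (i : ι) : compMat u i = 0 := by
      refine ((hν i).2.2.1 m _).mp (le_antisymm ?_ ((hν i).nonneg m _))
      exact h ▸ single_le_finsum i (hasFiniteSupport_l1Norm_summand hν u)
        fun j => (hν j).nonneg m _
    ext a b i
    exact congrFun (congrFun (hcomp i) a) b
  · rw [l1Norm_eq_sum hν (s := ∅) fun i _ => by rw [h]; rfl, Finset.sum_empty]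

theorem l1Norm_MatDSum_zero {k : ℕ} (u : Matrix (Fin m) (Fin m) (⨁ i, E i)) :
    l1Norm ν (m + k) (MatDSum u 0) = l1Norm ν m u := by
  refine finsum_congr fun i => ?_
  rw [compMat_eq_matAmpl_component, matAmpl_MatDSum (map_zero _), matAmpl_zero (map_zero _)]
  exact (hν i).2.2.2.1 m k _

theorem l1Norm_scalLeft_le (S : Matrix (Fin m) (Fin m) ℂ)
    (u : Matrix (Fin m) (Fin m) (⨁ i, E i)) :
    l1Norm ν m (scalLeft S u) ≤ opNorm S * l1Norm ν m u := by
  rw [l1Norm, l1Norm, mul_finsum]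
  refine finsum_le_finsum' (hasFiniteSupport_l1Norm_summand hν _)
    (Function.HasFiniteSupport.mul_right _ (hasFiniteSupport_l1Norm_summand hν u)) fun i => ?_
  simpa only [compMat_eq_matAmpl_component, matAmpl_scalLeft] using (hν i).2.2.2.2.1 m S _

theorem l1Norm_scalRight_le (u : Matrix (Fin m) (Fin m) (⨁ i, E i))
    (S : Matrix (Fin m) (Fin m) ℂ) :
    l1Norm ν m (scalRight u S) ≤ l1Norm ν m u * opNorm S := by
  rw [l1Norm, l1Norm, finsum_mul]
  refine finsum_le_finsum' (hasFiniteSupport_l1Norm_summand hν _)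
    (Function.HasFiniteSupport.mul_left (hasFiniteSupport_l1Norm_summand hν u) _) fun i => ?_
  simpa only [compMat_eq_matAmpl_component, matAmpl_scalRight] using (hν i).2.2.2.2.2 m _ S

theorem isMatrixNorm_l1Norm : IsMatrixNorm (l1Norm ν) :=
  ⟨fun _ => l1Norm_add_le hν, fun _ => l1Norm_smul hν, fun _ => l1Norm_eq_zero_iff hν,
    fun _ _ => l1Norm_MatDSum_zero hν, fun _ => l1Norm_scalLeft_le hν,
    fun _ => l1Norm_scalRight_le hν⟩

end L1Sum

section Coproduct

variable {ι : Type} [DecidableEq ι] {E : ι → Type} [∀ i, AddCommGroup (E i)]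
  [∀ i, Module ℂ (E i)] {ν : ∀ i, ∀ m : ℕ, Matrix (Fin m) (Fin m) (E i) → ℝ} {m : ℕ}

theorem compMat_matAmpl_lof_self (i : ι) (u : Matrix (Fin m) (Fin m) (E i)) :
    compMat (matAmpl (lof ℂ ι E i) u) i = u := by
  ext a b
  exact lof_apply ℂ i (u a b)

theorem compMat_matAmpl_lof_of_ne {i j : ι} (h : i ≠ j) (u : Matrix (Fin m) (Fin m) (E i)) :
    compMat (matAmpl (lof ℂ ι E i) u) j = 0 := by
  ext a b
  exact DFinsupp.single_eq_of_ne h.symm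

theorem isCC_lof (hν : ∀ i, IsMatrixNorm (ν i)) (i : ι) :
    IsCC (ν i) (l1Norm ν) (lof ℂ ι E i) := by
  refine ⟨(lof ℂ ι E i).isLinear, fun m u => le_of_eq ?_⟩
  rw [l1Norm, finsum_eq_single _ i fun j hj => ?_, compMat_matAmpl_lof_self]
  rw [compMat_matAmpl_lof_of_ne hj.symm, (hν j).map_zero]

variable {Y : Type} [AddCommGroup Y] [Module ℂ Y]

theorem toModule_apply_eq_sum (L : ∀ i, E i →ₗ[ℂ] Y) {x : ⨁ i, E i} {s : Finset ι}
    (hs : ∀ i ∉ s, x i = 0) : toModule ℂ ι Y L x = ∑ i ∈ s, L i (x i) := by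
  classical
  conv_lhs => rw [← sum_support_of x]
  rw [map_sum]
  simp only [← lof_eq_of ℂ, toModule_lof]
  refine Finset.sum_subset (fun i hi => ?_) fun i _ hi => ?_
  · exact by_contra fun his => DFinsupp.mem_support_iff.mp hi (hs i his)
  · rw [DFinsupp.notMem_support_iff.mp hi, map_zero]

theorem isCC_toModule (hν : ∀ i, IsMatrixNorm (ν i))
    {νY : ∀ m : ℕ, Matrix (Fin m) (Fin m) Y → ℝ} (hνY : IsMatrixNorm νY)
    {L : ∀ i, E i →ₗ[ℂ] Y} (hL : ∀ i, IsCC (ν i) νY (L i)) :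
    IsCC (l1Norm ν) νY (toModule ℂ ι Y L) := by
  refine ⟨(toModule ℂ ι Y L).isLinear, fun m u => ?_⟩
  obtain ⟨s, hs⟩ := exists_finset_compMat_eq_zero u
  have hsum : matAmpl (toModule ℂ ι Y L) u = ∑ i ∈ s, matAmpl (L i) (compMat u i) := by
    ext a b
    rw [Matrix.sum_apply]
    exact toModule_apply_eq_sum L fun i hi => congrFun (congrFun (hs i hi) a) b
  calc νY m (matAmpl (toModule ℂ ι Y L) u)
      ≤ ∑ i ∈ s, νY m (matAmpl (L i) (compMat u i)) := hsum ▸ hνY.sum_le m s _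
    _ ≤ ∑ i ∈ s, ν i m (compMat u i) := Finset.sum_le_sum fun i _ => (hL i).2 m _
    _ = l1Norm ν m u := (l1Norm_eq_sum hν hs).symm

end Coproduct

/-- **Proposition 8.** The matricial `ℓ¹`-sum `E = ⊕_ν E_ν` of a family of matricially
normed spaces is a matricially normed space, the natural embeddings `i_ν : E_ν → E` are
completely contractive, and `(E, (i_ν))` is the coproduct of the family in the category
of matricially normed spaces and completely contractive operators. -/
theorem l1Sum_is_coproduct (ι : Type) [DecidableEq ι] (E : ι → Type)
    [∀ i, AddCommGroup (E i)] [∀ i, Module ℂ (E i)]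
    (ν : ∀ i, ∀ m : ℕ, Matrix (Fin m) (Fin m) (E i) → ℝ)
    (hν : ∀ i, IsMatrixNorm (ν i)) :
    IsMatrixNorm (l1Norm ν) ∧
    (∀ i, IsCC (ν i) (l1Norm ν) (DirectSum.lof ℂ ι E i)) ∧
    (∀ (Y : Type) (_ : AddCommGroup Y) (_ : Module ℂ Y)
        (νY : ∀ m : ℕ, Matrix (Fin m) (Fin m) Y → ℝ), IsMatrixNorm νY →
      ∀ ψ : ∀ i, E i → Y, (∀ i, IsCC (ν i) νY (ψ i)) →
        ∃! Ψ : (⨁ i, E i) → Y, IsCC (l1Norm ν) νY Ψ ∧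
          ∀ (i : ι) (x : E i), Ψ (DirectSum.lof ℂ ι E i x) = ψ i x) := by
  refine ⟨isMatrixNorm_l1Norm hν, isCC_lof hν, fun Y _ _ νY hνY ψ hψ => ?_⟩
  let L (i : ι) : E i →ₗ[ℂ] Y := IsLinearMap.mk' (ψ i) (hψ i).1
  refine ⟨toModule ℂ ι Y L, ⟨isCC_toModule hν hνY hψ, toModule_lof ℂ⟩, ?_⟩
  rintro Ψ ⟨⟨hΨ, -⟩, hΨψ⟩
  have hΨL : IsLinearMap.mk' Ψ hΨ = toModule ℂ ι Y L :=
    linearMap_ext ℂ fun i => LinearMap.ext fun x =>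
      (hΨψ i x).trans (toModule_lof ℂ (φ := L) i x).symm
  exact congrArg DFunLike.coe hΨL
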